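/- Let G be a finite simple graph, a, b two nonadjacent vertices of G, and G' = G + (a,b). If an edge e' of G satisfies φ_{G'}(e') = φ_G(e') + 1, then there exists a (φ_G(e')+1)-truss of G' that contains both e' and the inserted edge (a,b). -/

import Mathlib

open SimpleGraph

variable {V : Type*}

/-- `H` is a `k`-truss of `G`: a connected subgraph with at least one edge in which
every edge lies in at least `k - 2` triangles of `H` (i.e. the endpoints of every edge
have at least `k - 2` common neighbors in `H`). -/
def IsTruss (G : SimpleGraph V) (k : ℕ) (H : G.Subgraph) : Prop :=
  H.Connected ∧ H.edgeSet.Nonempty ∧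
    ∀ a b : V, H.Adj a b → k - 2 ≤ {c : V | H.Adj a c ∧ H.Adj b c}.ncard

/-- The truss number `φ_G(e)` of an edge `e`: the largest `k` such that `e` lies in some
`k`-truss of `G`. -/
noncomputable def trussNumber (G : SimpleGraph V) (e : Sym2 V) : ℕ :=
  sSup {k : ℕ | ∃ H : G.Subgraph, IsTruss G k H ∧ e ∈ H.edgeSet}

/-- The support of the edge `(a, b)` in a subgraph `H`: the number of triangles of `H`
containing it, i.e. the number of common neighbors of `a` and `b` in `H`. -/
noncomputable def suppIn {G : SimpleGraph V} (H : G.Subgraph) (a b : V) : ℕ :=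
  {c : V | H.Adj a c ∧ H.Adj b c}.ncard

/-- The support of the edge `(a, b)` in `G`. -/
noncomputable def suppG (G : SimpleGraph V) (a b : V) : ℕ :=
  {c : V | G.Adj a c ∧ G.Adj b c}.ncard

/-- `S_{a,b}`: the common neighbors of `a` and `b` in `G`. -/
def commonNbrs (G : SimpleGraph V) (a b : V) : Set V :=
  {c : V | G.Adj a c ∧ G.Adj b c}

/-- `E_{S_{a,b} ↔ {a,b}}`: the edges of `G` joining a common neighbor of `a` and `b`
to `a` or to `b`. -/
def sideEdges (G : SimpleGraph V) (a b : V) : Set (Sym2 V) :=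
  {e | ∃ c, G.Adj a c ∧ G.Adj b c ∧ (e = s(a, c) ∨ e = s(b, c))}

/-- `k_min((a,b))`: minimum truss number among the edges of `E_{S_{a,b} ↔ {a,b}}`. -/
noncomputable def kmin (G : SimpleGraph V) (a b : V) : ℕ :=
  sInf (trussNumber G '' sideEdges G a b)

/-- `k_max((a,b))`: maximum truss number among the edges of `E_{S_{a,b} ↔ {a,b}}`. -/
noncomputable def kmax (G : SimpleGraph V) (a b : V) : ℕ :=
  sSup (trussNumber G '' sideEdges G a b)

/-- `G + (a,b)`: the graph obtained from `G` by inserting the edge `(a, b)`. -/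
def insertEdge (G : SimpleGraph V) (a b : V) : SimpleGraph V :=
  G ⊔ fromEdgeSet {s(a, b)}

/-
The truss of `G + (a,b)` realising `φ_{G+(a,b)}(e') = φ_G(e') + 1` must use the new edge:
otherwise it is already a subgraph of `G`, and it would witness `φ_G(e') ≥ φ_G(e') + 1`.
-/

lemma IsTruss.le_card_add_two [Fintype V] {G : SimpleGraph V} {k : ℕ} {H : G.Subgraph}
    (hH : IsTruss G k H) : k ≤ Fintype.card V + 2 := by
  obtain ⟨-, ⟨e, he⟩, hsupp⟩ := hH
  induction e using Sym2.ind with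
  | _ x y =>
    have hk := hsupp x y he
    have hcard := Set.ncard_le_card {c : V | H.Adj x c ∧ H.Adj y c}
    rw [Nat.card_eq_fintype_card] at hcard
    omega

lemma bddAbove_trussOrders [Fintype V] (G : SimpleGraph V) (e : Sym2 V) :
    BddAbove {k : ℕ | ∃ H : G.Subgraph, IsTruss G k H ∧ e ∈ H.edgeSet} :=
  ⟨Fintype.card V + 2, fun _ ⟨_, hH, _⟩ => hH.le_card_add_two⟩

lemma le_trussNumber [Fintype V] {G : SimpleGraph V} {k : ℕ} {H : G.Subgraph} {e : Sym2 V}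
    (hH : IsTruss G k H) (he : e ∈ H.edgeSet) : k ≤ trussNumber G e :=
  le_csSup (bddAbove_trussOrders G e) ⟨H, hH, he⟩

lemma exists_isTruss_trussNumber [Fintype V] {G : SimpleGraph V} {e : Sym2 V}
    (he : trussNumber G e ≠ 0) :
    ∃ H : G.Subgraph, IsTruss G (trussNumber G e) H ∧ e ∈ H.edgeSet := by
  refine Nat.sSup_mem (Set.nonempty_iff_ne_empty.mpr fun hempty => he ?_)
    (bddAbove_trussOrders G e)
  rw [trussNumber, hempty, csSup_empty, bot_eq_zero]

lemma IsTruss.exists_isTruss_of_forall_adj {G G' : SimpleGraph V} {k : ℕ} {H : G'.Subgraph}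
    (hH : IsTruss G' k H) (hHG : ∀ ⦃x y⦄, H.Adj x y → G.Adj x y) :
    ∃ H₀ : G.Subgraph, IsTruss G k H₀ ∧ H₀.edgeSet = H.edgeSet :=
  ⟨⟨H.verts, H.Adj, fun hxy => hHG hxy, fun hxy => H.edge_vert hxy, H.symm⟩,
    ⟨⟨hH.1.coe⟩, hH.2.1, hH.2.2⟩, rfl⟩

lemma adj_of_insertEdge_adj {G : SimpleGraph V} {a b x y : V}
    (hxy : (insertEdge G a b).Adj x y) (hne : s(x, y) ≠ s(a, b)) : G.Adj x y := by
  rcases hxy with hG | hnew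
  · exact hG
  · exact absurd ((fromEdgeSet_adj _).mp hnew).1 hne

theorem stmt8_general [Fintype V] (G : SimpleGraph V) (a b : V) (e' : Sym2 V)
    (h : trussNumber (insertEdge G a b) e' = trussNumber G e' + 1) :
    ∃ H : (insertEdge G a b).Subgraph,
      IsTruss (insertEdge G a b) (trussNumber G e' + 1) H ∧
      e' ∈ H.edgeSet ∧ s(a, b) ∈ H.edgeSet := by
  obtain ⟨H, hH, he'⟩ := exists_isTruss_trussNumber (h.trans_ne (Nat.succ_ne_zero _))
  rw [h] at hH
  refine ⟨H, hH, he', ?_⟩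
  by_contra hnew
  have hHG : ∀ ⦃x y⦄, H.Adj x y → G.Adj x y := fun x y hxy =>
    adj_of_insertEdge_adj (H.adj_sub hxy) fun hxy_ab => hnew (hxy_ab ▸ hxy)
  obtain ⟨H₀, hH₀, hedges⟩ := hH.exists_isTruss_of_forall_adj hHG
  have := le_trussNumber hH₀ (hedges ▸ he')
  omega

theorem stmt8 [Fintype V] (G : SimpleGraph V) (a b : V) (hab : a ≠ b)
    (hnadj : ¬ G.Adj a b) (e' : Sym2 V) (he' : e' ∈ G.edgeSet)
    (h : trussNumber (insertEdge G a b) e' = trussNumber G e' + 1) :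
    ∃ H : (insertEdge G a b).Subgraph,
      IsTruss (insertEdge G a b) (trussNumber G e' + 1) H ∧
      e' ∈ H.edgeSet ∧ s(a, b) ∈ H.edgeSet :=
  stmt8_general G a b e' h
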